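/- arXiv:2503.17253 — 2 statements merged into one kernel-verified Lean document; each statement's English description precedes it below -/
import Mathlib

section
/- Let d_i > 0 and e_i ∈ ℝ for i = 1,…,n with e_i ≠ 0 for at least one i. Then the function g(γ) = γ·∑_{i=1}^n d_i² + ∑_{i=1}^n e_i²·exp(−γ·d_i²) is strictly convex on ℝ and hence has at most one minimizer on any convex set. -/
/-! Each term `e_i² exp(-γ d_i²)` is a nonnegative multiple of `exp` composed with the injective
linear map `γ ↦ -d_i² γ`, hence convex, and strictly convex when `e_i ≠ 0`. Adding the linear term
`γ ∑ d_i²` preserves strict convexity, and a strictly convex function has at most one minimizer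
on a convex set. -/

open Set Real

section

variable {𝕜 E ι : Type*} [Field 𝕜] [LinearOrder 𝕜] [IsStrictOrderedRing 𝕜]
  [AddCommMonoid E] [Module 𝕜 E] {s : Set E}

theorem StrictConvexOn.const_mul {f : E → 𝕜} (hf : StrictConvexOn 𝕜 s f) {c : 𝕜} (hc : 0 < c) :
    StrictConvexOn 𝕜 s fun x => c * f x :=
  ⟨hf.1, fun x hx y hy hxy a b ha hb hab => by
    simpa only [smul_eq_mul, mul_add, mul_left_comm c] using
      mul_lt_mul_of_pos_left (hf.2 hx hy hxy ha hb hab) hc⟩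

theorem ConvexOn.sum {f : ι → E → 𝕜} {t : Finset ι} (hs : Convex 𝕜 s)
    (hf : ∀ i ∈ t, ConvexOn 𝕜 s (f i)) : ConvexOn 𝕜 s fun x => ∑ i ∈ t, f i x := by
  simpa only [← Finset.sum_apply] using
    Finset.sum_induction f (ConvexOn 𝕜 s) (fun _ _ => ConvexOn.add) (convexOn_const 0 hs) hf

theorem StrictConvexOn.sum_of_convexOn [DecidableEq ι] {f : ι → E → 𝕜} {t : Finset ι} {i₀ : ι}
    (hi₀ : i₀ ∈ t) (hstrict : StrictConvexOn 𝕜 s (f i₀)) (hf : ∀ i ∈ t, ConvexOn 𝕜 s (f i)) :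
    StrictConvexOn 𝕜 s fun x => ∑ i ∈ t, f i x := by
  simp only [← Finset.add_sum_erase t _ hi₀]
  exact hstrict.add_convexOn
    (ConvexOn.sum hstrict.1 fun i hi => hf i (Finset.mem_of_mem_erase hi))

end

theorem strictConvexOn_exp_mul {a : ℝ} (ha : a ≠ 0) :
    StrictConvexOn ℝ univ fun x => exp (a * x) :=
  ⟨convex_univ, fun x _ y _ hxy s t hs ht hst => by
    have hne : a * x ≠ a * y := mul_right_injective₀ ha |>.ne hxy
    simpa only [smul_eq_mul, mul_add, mul_left_comm a] using
      strictConvexOn_exp.2 (mem_univ _) (mem_univ _) hne hs ht hst⟩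

theorem stmt_7 (n : ℕ) (d e : Fin n → ℝ) (hd : ∀ i, 0 < d i)
    (he : ∃ i, e i ≠ 0) :
    let g : ℝ → ℝ := fun γ =>
      γ * ∑ i, (d i) ^ 2 + ∑ i, (e i) ^ 2 * Real.exp (-γ * (d i) ^ 2)
    StrictConvexOn ℝ Set.univ g ∧
    ∀ s : Set ℝ, Convex ℝ s → ∀ a ∈ s, ∀ b ∈ s,
      IsMinOn g s a → IsMinOn g s b → a = b := by
  intro g
  obtain ⟨i₀, hi₀⟩ := he
  have hexp (i) : StrictConvexOn ℝ univ fun γ => exp (-γ * d i ^ 2) := by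
    simpa only [neg_mul, mul_neg, mul_comm] using
      strictConvexOn_exp_mul (neg_ne_zero.2 (pow_ne_zero 2 (hd i).ne'))
  have hlin : ConvexOn ℝ univ fun γ : ℝ => γ * ∑ i, d i ^ 2 :=
    (LinearMap.id.smulRight _).convexOn convex_univ
  have hg : StrictConvexOn ℝ univ g :=
    hlin.add_strictConvexOn <| ((hexp i₀).const_mul (by positivity)).sum_of_convexOn
      (Finset.mem_univ i₀) fun i _ => (hexp i).convexOn.smul (sq_nonneg (e i))
  exact ⟨hg, fun s hs a ha b hb hma hmb =>
    (hg.subset (subset_univ s) hs).eq_of_isMinOn hma hmb ha hb⟩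
end

section
/- Let f: ℝⁿ × ℝᵐ → ℝ be continuous, U ⊆ ℝⁿ and V ⊆ ℝᵐ nonempty compact. Suppose (u_t, v_t) is generated by exact alternating minimization with the u-subproblem having a unique minimizer at each step. Then every convergent subsequence of (u_t, v_t) converges to a partial minimum of f on U × V. -/
theorem stmt_12 (n m : ℕ) (f : (Fin n → ℝ) → (Fin m → ℝ) → ℝ)
    (hf : Continuous fun p : (Fin n → ℝ) × (Fin m → ℝ) => f p.1 p.2)
    (U : Set (Fin n → ℝ)) (V : Set (Fin m → ℝ))
    (hU : U.Nonempty) (hUc : IsCompact U)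
    (hV : V.Nonempty) (hVc : IsCompact V)
    (u : ℕ → (Fin n → ℝ)) (v : ℕ → (Fin m → ℝ))
    (hu_mem : ∀ t, u t ∈ U) (hv_mem : ∀ t, v t ∈ V)
    (hu : ∀ t, ∀ u' ∈ U, f (u (t + 1)) (v t) ≤ f u' (v t))
    (hu_unique : ∀ t, ∀ u' ∈ U, f u' (v t) = f (u (t + 1)) (v t) → u' = u (t + 1))
    (hv : ∀ t, ∀ v' ∈ V, f (u (t + 1)) (v (t + 1)) ≤ f (u (t + 1)) v') :
    ∀ (φ : ℕ → ℕ), StrictMono φ →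
      ∀ p : (Fin n → ℝ) × (Fin m → ℝ),
        Filter.Tendsto (fun k => (u (φ k), v (φ k))) Filter.atTop (nhds p) →
        p.1 ∈ U ∧ p.2 ∈ V ∧
        (∀ u' ∈ U, f p.1 p.2 ≤ f u' p.2) ∧
        (∀ v' ∈ V, f p.1 p.2 ≤ f p.1 v') := by
  intro φ hφ p hp
  -- component limits
  have hpu : Filter.Tendsto (fun k => u (φ k)) Filter.atTop (nhds p.1) :=
    (continuous_fst.tendsto p).comp hp
  have hpv : Filter.Tendsto (fun k => v (φ k)) Filter.atTop (nhds p.2) :=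
    (continuous_snd.tendsto p).comp hp
  have hp1 : p.1 ∈ U :=
    hUc.isClosed.mem_of_tendsto hpu (Filter.Eventually.of_forall fun k => hu_mem _)
  have hp2 : p.2 ∈ V :=
    hVc.isClosed.mem_of_tendsto hpv (Filter.Eventually.of_forall fun k => hv_mem _)
  -- shifted subsequence also converges
  have hp' : Filter.Tendsto (fun k => (u (φ (k + 1)), v (φ (k + 1)))) Filter.atTop (nhds p) :=
    hp.comp (Filter.tendsto_add_atTop_nat 1)
  have hL : Filter.Tendsto (fun k => f (u (φ (k + 1))) (v (φ (k + 1)))) Filter.atTop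
      (nhds (f p.1 p.2)) := (hf.tendsto p).comp hp'
  -- the objective values are antitone
  have ha : Antitone (fun t => f (u t) (v t)) :=
    antitone_nat_of_succ_le fun t =>
      (hv t (v t) (hv_mem t)).trans (hu t (u t) (hu_mem t))
  refine ⟨hp1, hp2, ?_, ?_⟩
  · intro u' hu'
    have step : ∀ k, f (u (φ (k + 1))) (v (φ (k + 1))) ≤ f u' (v (φ k)) := fun k =>
      (ha (Nat.succ_le_of_lt (hφ (Nat.lt_succ_self k)))).trans
        ((hv (φ k) (v (φ k)) (hv_mem _)).trans (hu (φ k) u' hu'))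
    have hR : Filter.Tendsto (fun k => f u' (v (φ k))) Filter.atTop (nhds (f u' p.2)) := by
      have hc : Continuous fun x : Fin m → ℝ => f u' x :=
        hf.comp (continuous_const.prodMk continuous_id)
      exact (hc.tendsto p.2).comp hpv
    exact le_of_tendsto_of_tendsto' hL hR step
  · intro v' hv'
    have step : ∀ k, f (u (φ (k + 1))) (v (φ (k + 1))) ≤ f (u (φ (k + 1))) v' := by
      intro k
      have hpos : 0 < φ (k + 1) := lt_of_le_of_lt (Nat.zero_le _) (hφ (Nat.succ_pos k))
      have heq : φ (k + 1) - 1 + 1 = φ (k + 1) := Nat.succ_pred_eq_of_pos hpos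
      rw [← heq]
      exact hv (φ (k + 1) - 1) v' hv'
    have hR : Filter.Tendsto (fun k => f (u (φ (k + 1))) v') Filter.atTop
        (nhds (f p.1 v')) := by
      have hc : Continuous fun x : Fin n → ℝ => f x v' :=
        hf.comp (continuous_id.prodMk continuous_const)
      exact ((hc.tendsto p.1).comp hpu).comp (Filter.tendsto_add_atTop_nat 1)
    exact le_of_tendsto_of_tendsto' hL hR step
end
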